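/- Let H0 be the house graph (vertices w1,...,w7, edges w1w2, w2w3, w3w4, w4w5, w1w5, w2w5, w3w6, w4w7). Up to exchanging the two '1'-colors, exchanging the two '2'-colors, and the reflection symmetry, H0 has exactly two (1,1,2,2)-packing edge-colorings: Type I with f(w2w3)=1a, f(w3w4)=1b, f(w4w5)=1a, f(w3w6)=2a, f(w4w7)=2b, f(w2w5)=1b, f(w1w5)=2a, f(w1w2)=2b; and Type II with f(w2w3)=1a, f(w3w4)=2a, f(w4w5)=1b, f(w2w5)=2b, f(w1w2)=1b, f(w1w5)=1a, f(w3w6)=1b, f(w4w7)=1a. -/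
import Mathlib


open SimpleGraph

/-- The distance between two edges: the minimum, over endpoints `a` of `e` and `b` of `f`,
of the vertex distance between `a` and `b` (as an extended natural number,
`⊤` when no endpoints are connected). -/
noncomputable def edgeDist {V : Type*} (G : SimpleGraph V) (e f : Sym2 V) : ℕ∞ :=
  sInf {d : ℕ∞ | ∃ a ∈ e, ∃ b ∈ f, G.edist a b = d}

/-- An `S`-packing edge-coloring (in the closest-endpoint vertex-distance convention):
a map `c` assigning to each edge a color `i : Fin k` such that any two distinct
same-colored edges are at edge-distance at least `S i`.  A class with `S i = 1` is a
matching, `S i = 2` an induced matching, etc. -/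
def IsPackingEdgeColoring {V : Type*} (G : SimpleGraph V) {k : ℕ} (S : Fin k → ℕ)
    (c : Sym2 V → Fin k) : Prop :=
  ∀ e ∈ G.edgeSet, ∀ f ∈ G.edgeSet, e ≠ f → c e = c f →
    (S (c e) : ℕ∞) ≤ edgeDist G e f

/-- The house graph $H_0$ (vertex $w_{i+1}$ = `i : Fin 7`). -/
def H0 : SimpleGraph (Fin 7) :=
  SimpleGraph.fromRel (fun a b =>
    (a, b) ∈ ([(0,1),(1,2),(2,3),(3,4),(0,4),(1,4),(2,5),(3,6)] : List (Fin 7 × Fin 7)))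

/-- The reflection automorphism of the house: $w_1 ↦ w_1, w_2 ↔ w_5, w_3 ↔ w_4, w_6 ↔ w_7$. -/
def houseRefl : Fin 7 → Fin 7 := ![0, 4, 3, 2, 1, 6, 5]

/-- Color names: `0` = $1_a$, `1` = $1_b$ (matchings), `2` = $2_a$, `3` = $2_b$
(induced matchings).  The Type I $(1^2,2^2)$-coloring of $H_0$. -/
def typeI : Sym2 (Fin 7) → Fin 4 := fun e =>
  if e = s(1,2) ∨ e = s(3,4) then 0
  else if e = s(2,3) ∨ e = s(1,4) then 1
  else if e = s(2,5) ∨ e = s(0,4) then 2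
  else 3  -- on s(3,6) and s(0,1)

/-- The Type II $(1^2,2^2)$-coloring of $H_0$. -/
def typeII : Sym2 (Fin 7) → Fin 4 := fun e =>
  if e = s(1,2) ∨ e = s(0,4) ∨ e = s(3,6) then 0
  else if e = s(3,4) ∨ e = s(0,1) ∨ e = s(2,5) then 1
  else if e = s(2,3) then 2
  else 3  -- on s(1,4)

/-- Two colorings agree up to exchanging the two 1-colors, exchanging the two 2-colors,
and possibly the reflection symmetry of the house. -/
def EquivCol (c d : Sym2 (Fin 7) → Fin 4) : Prop :=
  ∃ σ : Equiv.Perm (Fin 4),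
    ((σ 0 = 0 ∧ σ 1 = 1) ∨ (σ 0 = 1 ∧ σ 1 = 0)) ∧
    ((σ 2 = 2 ∧ σ 3 = 3) ∨ (σ 2 = 3 ∧ σ 3 = 2)) ∧
    ((∀ e ∈ H0.edgeSet, σ (c e) = d e) ∨
     (∀ e ∈ H0.edgeSet, σ (c (e.map houseRefl)) = d e))


-- ===================== auxiliary machinery =====================

instance : DecidableRel H0.Adj := fun a b =>
  decidable_of_iff _ (SimpleGraph.fromRel_adj _ a b).symm

/-- The eight edges of the house graph. -/
def E8 : Fin 8 → Sym2 (Fin 7) := ![s(0,1), s(1,2), s(2,3), s(3,4), s(0,4), s(1,4), s(2,5), s(3,6)]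

/-- Index action of the reflection on the edges. -/
def rIdx : Fin 8 → Fin 8 := ![4,3,2,1,0,5,7,6]

def okN (a0 a1 a2 a3 a4 a5 a6 a7 : Nat) : Bool :=
  (a0 != a1) && (a0 != a4) && (a0 != a5) && (a1 != a2) && (a1 != a5) && (a1 != a6) && (a2 != a3) && (a2 != a6) && (a2 != a7) && (a3 != a4) && (a3 != a5) && (a3 != a7) && (a4 != a5) && (a0 != a2 || a0 == 0 || a0 == 1) && (a0 != a3 || a0 == 0 || a0 == 1) && (a0 != a6 || a0 == 0 || a0 == 1) && (a1 != a3 || a1 == 0 || a1 == 1) && (a1 != a4 || a1 == 0 || a1 == 1) && (a1 != a7 || a1 == 0 || a1 == 1) && (a2 != a4 || a2 == 0 || a2 == 1) && (a2 != a5 || a2 == 0 || a2 == 1) && (a3 != a6 || a3 == 0 || a3 == 1) && (a4 != a7 || a4 == 0 || a4 == 1) && (a5 != a6 || a5 == 0 || a5 == 1) && (a5 != a7 || a5 == 0 || a5 == 1) && (a6 != a7 || a6 == 0 || a6 == 1)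
def qN (a0 a1 a2 a3 a4 a5 a6 a7 : Nat) : Bool :=
  ((a0 == 3) && (a1 == 0) && (a2 == 1) && (a3 == 0) && (a4 == 2) && (a5 == 1) && (a6 == 2) && (a7 == 3)) || ((a4 == 3) && (a3 == 0) && (a2 == 1) && (a1 == 0) && (a0 == 2) && (a5 == 1) && (a7 == 2) && (a6 == 3)) || ((a0 == 2) && (a1 == 0) && (a2 == 1) && (a3 == 0) && (a4 == 3) && (a5 == 1) && (a6 == 3) && (a7 == 2)) || ((a4 == 2) && (a3 == 0) && (a2 == 1) && (a1 == 0) && (a0 == 3) && (a5 == 1) && (a7 == 3) && (a6 == 2)) || ((a0 == 3) && (a1 == 1) && (a2 == 0) && (a3 == 1) && (a4 == 2) && (a5 == 0) && (a6 == 2) && (a7 == 3)) || ((a4 == 3) && (a3 == 1) && (a2 == 0) && (a1 == 1) && (a0 == 2) && (a5 == 0) && (a7 == 2) && (a6 == 3)) || ((a0 == 2) && (a1 == 1) && (a2 == 0) && (a3 == 1) && (a4 == 3) && (a5 == 0) && (a6 == 3) && (a7 == 2)) || ((a4 == 2) && (a3 == 1) && (a2 == 0) && (a1 == 1) && (a0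 == 3) && (a5 == 0) && (a7 == 3) && (a6 == 2)) || ((a0 == 1) && (a1 == 0) && (a2 == 2) && (a3 == 1) && (a4 == 0) && (a5 == 3) && (a6 == 1) && (a7 == 0)) || ((a4 == 1) && (a3 == 0) && (a2 == 2) && (a1 == 1) && (a0 == 0) && (a5 == 3) && (a7 == 1) && (a6 == 0)) || ((a0 == 1) && (a1 == 0) && (a2 == 3) && (a3 == 1) && (a4 == 0) && (a5 == 2) && (a6 == 1) && (a7 == 0)) || ((a4 == 1) && (a3 == 0) && (a2 == 3) && (a1 == 1) && (a0 == 0) && (a5 == 2) && (a7 == 1) && (a6 == 0)) || ((a0 == 0) && (a1 == 1) && (a2 == 2) && (a3 == 0) && (a4 == 1) && (a5 == 3) && (a6 == 0) && (a7 == 1)) || ((a4 == 0) && (a3 == 1) && (a2 == 2) && (a1 == 0) && (a0 == 1) && (a5 == 3) && (a7 == 0) && (a6 == 1)) || ((a0 == 0) && (a1 == 1) && (a2 == 3) && (a3 == 0) && (a4 == 1) && (a5 == 2) && (a6 == 0) && (a7 == 1)) || ((a4 == 0) && (a3 == 1) && (a2 == 3) && (a1 == 0) && (a0 == 1) && (a5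 == 2) && (a7 == 0) && (a6 == 1))
def allFin4 (p : Nat → Bool) : Bool := p 0 && p 1 && p 2 && p 3
lemma allFin4_eq {p : Nat → Bool} (h : allFin4 p = true) : ∀ a : Fin 4, p a.val = true := by
  intro a
  simp only [allFin4, Bool.and_eq_true] at h
  obtain ⟨⟨⟨h0, h1⟩, h2⟩, h3⟩ := h
  fin_cases a <;> assumption
lemma orPeel {g x : Bool} (h : (!g || x) = true) (hg : g = true) : x = true := by
  rw [hg] at h; simpa using h
def big : Bool := allFin4 fun a0 => allFin4 fun a1 => !((a0 != a1)) || (allFin4 fun a2 => !((a1 != a2) && (a0 != a2 || a0 == 0 || a0 == 1)) || (allFin4 fun a3 => !((a2 != a3) && (a0 != a3 || a0 == 0 || a0 == 1) && (a1 != a3 || a1 == 0 || a1 == 1)) || (allFin4 fun a4 => !((a0 != a4) && (a3 != a4) && (a1 != a4 || a1 == 0 || a1 == 1) && (a2 != a4 || a2 == 0 || a2 == 1)) || (allFin4 fun a5 => !((a0 != a5) && (a1 != a5) && (a3 != a5) && (a4 != a5) && (a2 != a5 || a2 == 0 || a2 == 1)) || (allFin4 fun a6 => !((a1 != a6) &&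 (a2 != a6) && (a0 != a6 || a0 == 0 || a0 == 1) && (a3 != a6 || a3 == 0 || a3 == 1) && (a5 != a6 || a5 == 0 || a5 == 1)) || (allFin4 fun a7 => !((a2 != a7) && (a3 != a7) && (a1 != a7 || a1 == 0 || a1 == 1) && (a4 != a7 || a4 == 0 || a4 == 1) && (a5 != a7 || a5 == 0 || a5 == 1) && (a6 != a7 || a6 == 0 || a6 == 1)) || (qN a0 a1 a2 a3 a4 a5 a6 a7)))))))
set_option maxRecDepth 10000 in
theorem bigT : big = true := by rfl
theorem key (a0 a1 a2 a3 a4 a5 a6 a7 : Fin 4)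
    (h : okN a0.val a1.val a2.val a3.val a4.val a5.val a6.val a7.val = true) :
    qN a0.val a1.val a2.val a3.val a4.val a5.val a6.val a7.val = true := by
  simp only [okN, Bool.and_eq_true] at h
  obtain ⟨⟨⟨⟨⟨⟨⟨⟨⟨⟨⟨⟨⟨⟨⟨⟨⟨⟨⟨⟨⟨⟨⟨⟨⟨c1,c2⟩,c3⟩,c4⟩,c5⟩,c6⟩,c7⟩,c8⟩,c9⟩,c10⟩,c11⟩,c12⟩,c13⟩,c14⟩,c15⟩,c16⟩,c17⟩,c18⟩,c19⟩,c20⟩,c21⟩,c22⟩,c23⟩,c24⟩,c25⟩,c26⟩ := h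
  have h0 := allFin4_eq bigT a0
  have h1 := orPeel (allFin4_eq h0 a1) c1
  have hg2 : ((a1.val != a2.val) && (a0.val != a2.val || a0.val == 0 || a0.val == 1)) = true := by rw [c4, c14] <;> rfl
  have h2 := orPeel (allFin4_eq h1 a2) hg2
  have hg3 : ((a2.val != a3.val) && (a0.val != a3.val || a0.val == 0 || a0.val == 1) && (a1.val != a3.val || a1.val == 0 || a1.val == 1)) = true := by rw [c7, c15, c17] <;> rfl
  have h3 := orPeel (allFin4_eq h2 a3) hg3
  have hg4 : ((a0.val != a4.val) && (a3.val != a4.val) && (a1.val != a4.val || a1.val == 0 || a1.val == 1) && (a2.val != a4.val || a2.val == 0 || a2.val == 1)) = true := by rw [c2, c10, c18, c20] <;> rfl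
  have h4 := orPeel (allFin4_eq h3 a4) hg4
  have hg5 : ((a0.val != a5.val) && (a1.val != a5.val) && (a3.val != a5.val) && (a4.val != a5.val) && (a2.val != a5.val || a2.val == 0 || a2.val == 1)) = true := by rw [c3, c5, c11, c13, c21] <;> rfl
  have h5 := orPeel (allFin4_eq h4 a5) hg5
  have hg6 : ((a1.val != a6.val) && (a2.val != a6.val) && (a0.val != a6.val || a0.val == 0 || a0.val == 1) && (a3.val != a6.val || a3.val == 0 || a3.val == 1) && (a5.val != a6.val || a5.val == 0 || a5.val == 1)) = true := by rw [c6, c8, c16, c22, c24] <;> rfl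
  have h6 := orPeel (allFin4_eq h5 a6) hg6
  have hg7 : ((a2.val != a7.val) && (a3.val != a7.val) && (a1.val != a7.val || a1.val == 0 || a1.val == 1) && (a4.val != a7.val || a4.val == 0 || a4.val == 1) && (a5.val != a7.val || a5.val == 0 || a5.val == 1) && (a6.val != a7.val || a6.val == 0 || a6.val == 1)) = true := by rw [c9, c12, c19, c23, c25, c26] <;> rfl
  have h7 := orPeel (allFin4_eq h6 a7) hg7
  exact h7

lemma le_edgeDist {V : Type*} (G : SimpleGraph V) (e f : Sym2 V) (n : ℕ∞)
    (h : ∀ a ∈ e, ∀ b ∈ f, n ≤ G.edist a b) : n ≤ edgeDist G e f :=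
  le_sInf (by rintro d ⟨a, ha, b, hb, rfl⟩; exact h a ha b hb)

lemma edgeDist_le {V : Type*} (G : SimpleGraph V) {e f : Sym2 V} {a b : V}
    (ha : a ∈ e) (hb : b ∈ f) : edgeDist G e f ≤ G.edist a b :=
  sInf_le ⟨a, ha, b, hb, rfl⟩

lemma one_le_edist {V : Type*} (G : SimpleGraph V) {a b : V} (h : a ≠ b) :
    1 ≤ G.edist a b :=
  ENat.one_le_iff_ne_zero.2 fun h0 => h (edist_eq_zero_iff.1 h0)

lemma two_le_edist {V : Type*} (G : SimpleGraph V) {a b : V} (h1 : a ≠ b)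
    (h2 : ¬ G.Adj a b) : 2 ≤ G.edist a b := by
  have h0 : G.edist a b ≠ 0 := fun h => h1 (edist_eq_zero_iff.1 h)
  have hone : G.edist a b ≠ 1 := fun h => h2 (edist_eq_one_iff_adj.1 h)
  exact Order.add_one_le_of_lt (lt_of_le_of_ne (ENat.one_le_iff_ne_zero.2 h0) (Ne.symm hone))

lemma four_cases : ∀ y : Fin 4, y = 0 ∨ y = 1 ∨ y = 2 ∨ y = 3 := by decide

lemma pack_of (c : Sym2 (Fin 7) → Fin 4)
    (h : ∀ e ∈ H0.edgeSet, ∀ f ∈ H0.edgeSet, e ≠ f → c e = c f →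
      (∀ a ∈ e, ∀ b ∈ f, a ≠ b) ∧
      ((c e = 2 ∨ c e = 3) → ∀ a ∈ e, ∀ b ∈ f, ¬ H0.Adj a b)) :
    IsPackingEdgeColoring H0 ![1,1,2,2] c := by
  intro e he f hf hne hcol
  obtain ⟨h1, h2⟩ := h e he f hf hne hcol
  refine le_edgeDist _ _ _ _ fun a ha b hb => ?_
  rcases four_cases (c e) with h4 | h4 | h4 | h4 <;> rw [h4] <;> simp only [Matrix.cons_val_zero,
    Matrix.cons_val_one, Matrix.head_cons, Matrix.cons_val_two, Matrix.tail_cons,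
    Matrix.cons_val_three, Nat.cast_one, Nat.cast_ofNat]
  · exact one_le_edist _ (h1 a ha b hb)
  · exact one_le_edist _ (h1 a ha b hb)
  · exact two_le_edist _ (h1 a ha b hb) (h2 (Or.inl h4) a ha b hb)
  · exact two_le_edist _ (h1 a ha b hb) (h2 (Or.inr h4) a ha b hb)

lemma hmemE : ∀ i : Fin 8, E8 i ∈ H0.edgeSet := by decide
lemma hsurjE : ∀ e ∈ H0.edgeSet, ∃ i : Fin 8, E8 i = e := by decide
lemma hneE : ∀ i j : Fin 8, i ≠ j → E8 i ≠ E8 j := by decide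
lemma hmapE : ∀ i : Fin 8, (E8 i).map houseRefl = E8 (rIdx i) := by decide

lemma colorShare {c : Sym2 (Fin 7) → Fin 4} (hc : IsPackingEdgeColoring H0 ![1,1,2,2] c)
    {i j : Fin 8} (hij : i ≠ j) (hw : ∃ a, a ∈ E8 i ∧ a ∈ E8 j) :
    c (E8 i) ≠ c (E8 j) := by
  intro hcc
  obtain ⟨a, ha, hb⟩ := hw
  have h1 := hc (E8 i) (hmemE i) (E8 j) (hmemE j) (hneE i j hij) hcc
  have h2 : edgeDist H0 (E8 i) (E8 j) ≤ 0 := by simpa using edgeDist_le H0 ha hb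
  have h3 := le_trans h1 h2
  rcases four_cases (c (E8 i)) with h | h | h | h <;> rw [h] at h3 <;> exact absurd h3 (by decide)

lemma colorFar {c : Sym2 (Fin 7) → Fin 4} (hc : IsPackingEdgeColoring H0 ![1,1,2,2] c)
    {i j : Fin 8} (hij : i ≠ j) (hw : ∃ a ∈ E8 i, ∃ b ∈ E8 j, H0.Adj a b)
    (hcc : c (E8 i) = c (E8 j)) : c (E8 i) = 0 ∨ c (E8 i) = 1 := by
  obtain ⟨a, ha, b, hb, hab⟩ := hw
  have h1 := hc (E8 i) (hmemE i) (E8 j) (hmemE j) (hneE i j hij) hcc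
  have h2 : edgeDist H0 (E8 i) (E8 j) ≤ 1 := by
    have h' := edgeDist_le H0 ha hb
    rwa [edist_eq_one_iff_adj.2 hab] at h'
  have h3 := le_trans h1 h2
  rcases four_cases (c (E8 i)) with h | h | h | h
  · exact Or.inl h
  · exact Or.inr h
  · rw [h] at h3; exact absurd h3 (by decide)
  · rw [h] at h3; exact absurd h3 (by decide)

lemma equivBuild (c t : Sym2 (Fin 7) → Fin 4) (σ : Equiv.Perm (Fin 4)) (v : Fin 8 → Fin 4)
    (hσ1 : (σ 0 = 0 ∧ σ 1 = 1) ∨ (σ 0 = 1 ∧ σ 1 = 0))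
    (hσ2 : (σ 2 = 2 ∧ σ 3 = 3) ∨ (σ 2 = 3 ∧ σ 3 = 2))
    (hv : ∀ i, c (E8 i) = v i) (htv : ∀ i, σ (v i) = t (E8 i)) :
    EquivCol c t :=
  ⟨σ, hσ1, hσ2, Or.inl fun e he => by
    obtain ⟨i, rfl⟩ := hsurjE e he
    rw [hv i, htv i]⟩

lemma equivBuildR (c t : Sym2 (Fin 7) → Fin 4) (σ : Equiv.Perm (Fin 4)) (v : Fin 8 → Fin 4)
    (hσ1 : (σ 0 = 0 ∧ σ 1 = 1) ∨ (σ 0 = 1 ∧ σ 1 = 0))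
    (hσ2 : (σ 2 = 2 ∧ σ 3 = 3) ∨ (σ 2 = 3 ∧ σ 3 = 2))
    (hv : ∀ i, c (E8 (rIdx i)) = v i) (htv : ∀ i, σ (v i) = t (E8 i)) :
    EquivCol c t :=
  ⟨σ, hσ1, hσ2, Or.inr fun e he => by
    obtain ⟨i, rfl⟩ := hsurjE e he
    rw [hmapE i, hv i, htv i]⟩


/-- Up to exchanging the two 1-colors, exchanging the two 2-colors, and the reflection
symmetry, $H_0$ has exactly two $(1^2,2^2)$-packing edge-colorings: Type I and Type II. -/
theorem stmt13 :
    IsPackingEdgeColoring H0 ![1,1,2,2] typeI ∧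
    IsPackingEdgeColoring H0 ![1,1,2,2] typeII ∧
    (∀ c : Sym2 (Fin 7) → Fin 4, IsPackingEdgeColoring H0 ![1,1,2,2] c →
      EquivCol c typeI ∨ EquivCol c typeII) ∧
    ¬ EquivCol typeI typeII := by
  refine ⟨pack_of typeI (by decide), pack_of typeII (by decide), ?_, ?_⟩
  · intro c hc
    have s1 : ((c (E8 0)).val != (c (E8 1)).val) = true := by
      have h' := colorShare hc (i := 0) (j := 1) (by decide) (by decide)
      simpa [bne_iff_ne, ne_eq, Fin.val_eq_val] using h'
    have s2 : ((c (E8 0)).val != (c (E8 4)).val) = true := by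
      have h' := colorShare hc (i := 0) (j := 4) (by decide) (by decide)
      simpa [bne_iff_ne, ne_eq, Fin.val_eq_val] using h'
    have s3 : ((c (E8 0)).val != (c (E8 5)).val) = true := by
      have h' := colorShare hc (i := 0) (j := 5) (by decide) (by decide)
      simpa [bne_iff_ne, ne_eq, Fin.val_eq_val] using h'
    have s4 : ((c (E8 1)).val != (c (E8 2)).val) = true := by
      have h' := colorShare hc (i := 1) (j := 2) (by decide) (by decide)
      simpa [bne_iff_ne, ne_eq, Fin.val_eq_val] using h'
    have s5 : ((c (E8 1)).val != (c (E8 5)).val) = true := by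
      have h' := colorShare hc (i := 1) (j := 5) (by decide) (by decide)
      simpa [bne_iff_ne, ne_eq, Fin.val_eq_val] using h'
    have s6 : ((c (E8 1)).val != (c (E8 6)).val) = true := by
      have h' := colorShare hc (i := 1) (j := 6) (by decide) (by decide)
      simpa [bne_iff_ne, ne_eq, Fin.val_eq_val] using h'
    have s7 : ((c (E8 2)).val != (c (E8 3)).val) = true := by
      have h' := colorShare hc (i := 2) (j := 3) (by decide) (by decide)
      simpa [bne_iff_ne, ne_eq, Fin.val_eq_val] using h'
    have s8 : ((c (E8 2)).val != (c (E8 6)).val) = true := by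
      have h' := colorShare hc (i := 2) (j := 6) (by decide) (by decide)
      simpa [bne_iff_ne, ne_eq, Fin.val_eq_val] using h'
    have s9 : ((c (E8 2)).val != (c (E8 7)).val) = true := by
      have h' := colorShare hc (i := 2) (j := 7) (by decide) (by decide)
      simpa [bne_iff_ne, ne_eq, Fin.val_eq_val] using h'
    have s10 : ((c (E8 3)).val != (c (E8 4)).val) = true := by
      have h' := colorShare hc (i := 3) (j := 4) (by decide) (by decide)
      simpa [bne_iff_ne, ne_eq, Fin.val_eq_val] using h'
    have s11 : ((c (E8 3)).val != (c (E8 5)).val) = true := by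
      have h' := colorShare hc (i := 3) (j := 5) (by decide) (by decide)
      simpa [bne_iff_ne, ne_eq, Fin.val_eq_val] using h'
    have s12 : ((c (E8 3)).val != (c (E8 7)).val) = true := by
      have h' := colorShare hc (i := 3) (j := 7) (by decide) (by decide)
      simpa [bne_iff_ne, ne_eq, Fin.val_eq_val] using h'
    have s13 : ((c (E8 4)).val != (c (E8 5)).val) = true := by
      have h' := colorShare hc (i := 4) (j := 5) (by decide) (by decide)
      simpa [bne_iff_ne, ne_eq, Fin.val_eq_val] using h'
    have f1 : ((c (E8 0)).val != (c (E8 2)).val || (c (E8 0)).val == 0 || (c (E8 0)).val == 1) = true := by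
      rcases eq_or_ne (c (E8 0)) (c (E8 2)) with h' | h'
      · rcases colorFar hc (i := 0) (j := 2) (by decide) (by decide) h' with h0 | h0 <;> simp [h0]
      · have h'' : (c (E8 0)).val ≠ (c (E8 2)).val := fun hv => h' (Fin.ext hv)
        simp [h'']
    have f2 : ((c (E8 0)).val != (c (E8 3)).val || (c (E8 0)).val == 0 || (c (E8 0)).val == 1) = true := by
      rcases eq_or_ne (c (E8 0)) (c (E8 3)) with h' | h'
      · rcases colorFar hc (i := 0) (j := 3) (by decide) (by decide) h' with h0 | h0 <;> simp [h0]
      · have h'' : (c (E8 0)).val ≠ (c (E8 3)).val := fun hv => h' (Fin.ext hv)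
        simp [h'']
    have f3 : ((c (E8 0)).val != (c (E8 6)).val || (c (E8 0)).val == 0 || (c (E8 0)).val == 1) = true := by
      rcases eq_or_ne (c (E8 0)) (c (E8 6)) with h' | h'
      · rcases colorFar hc (i := 0) (j := 6) (by decide) (by decide) h' with h0 | h0 <;> simp [h0]
      · have h'' : (c (E8 0)).val ≠ (c (E8 6)).val := fun hv => h' (Fin.ext hv)
        simp [h'']
    have f4 : ((c (E8 1)).val != (c (E8 3)).val || (c (E8 1)).val == 0 || (c (E8 1)).val == 1) = true := by
      rcases eq_or_ne (c (E8 1)) (c (E8 3)) with h' | h'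
      · rcases colorFar hc (i := 1) (j := 3) (by decide) (by decide) h' with h0 | h0 <;> simp [h0]
      · have h'' : (c (E8 1)).val ≠ (c (E8 3)).val := fun hv => h' (Fin.ext hv)
        simp [h'']
    have f5 : ((c (E8 1)).val != (c (E8 4)).val || (c (E8 1)).val == 0 || (c (E8 1)).val == 1) = true := by
      rcases eq_or_ne (c (E8 1)) (c (E8 4)) with h' | h'
      · rcases colorFar hc (i := 1) (j := 4) (by decide) (by decide) h' with h0 | h0 <;> simp [h0]
      · have h'' : (c (E8 1)).val ≠ (c (E8 4)).val := fun hv => h' (Fin.ext hv)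
        simp [h'']
    have f6 : ((c (E8 1)).val != (c (E8 7)).val || (c (E8 1)).val == 0 || (c (E8 1)).val == 1) = true := by
      rcases eq_or_ne (c (E8 1)) (c (E8 7)) with h' | h'
      · rcases colorFar hc (i := 1) (j := 7) (by decide) (by decide) h' with h0 | h0 <;> simp [h0]
      · have h'' : (c (E8 1)).val ≠ (c (E8 7)).val := fun hv => h' (Fin.ext hv)
        simp [h'']
    have f7 : ((c (E8 2)).val != (c (E8 4)).val || (c (E8 2)).val == 0 || (c (E8 2)).val == 1) = true := by
      rcases eq_or_ne (c (E8 2)) (c (E8 4)) with h' | h'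
      · rcases colorFar hc (i := 2) (j := 4) (by decide) (by decide) h' with h0 | h0 <;> simp [h0]
      · have h'' : (c (E8 2)).val ≠ (c (E8 4)).val := fun hv => h' (Fin.ext hv)
        simp [h'']
    have f8 : ((c (E8 2)).val != (c (E8 5)).val || (c (E8 2)).val == 0 || (c (E8 2)).val == 1) = true := by
      rcases eq_or_ne (c (E8 2)) (c (E8 5)) with h' | h'
      · rcases colorFar hc (i := 2) (j := 5) (by decide) (by decide) h' with h0 | h0 <;> simp [h0]
      · have h'' : (c (E8 2)).val ≠ (c (E8 5)).val := fun hv => h' (Fin.ext hv)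
        simp [h'']
    have f9 : ((c (E8 3)).val != (c (E8 6)).val || (c (E8 3)).val == 0 || (c (E8 3)).val == 1) = true := by
      rcases eq_or_ne (c (E8 3)) (c (E8 6)) with h' | h'
      · rcases colorFar hc (i := 3) (j := 6) (by decide) (by decide) h' with h0 | h0 <;> simp [h0]
      · have h'' : (c (E8 3)).val ≠ (c (E8 6)).val := fun hv => h' (Fin.ext hv)
        simp [h'']
    have f10 : ((c (E8 4)).val != (c (E8 7)).val || (c (E8 4)).val == 0 || (c (E8 4)).val == 1) = true := by
      rcases eq_or_ne (c (E8 4)) (c (E8 7)) with h' | h'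
      · rcases colorFar hc (i := 4) (j := 7) (by decide) (by decide) h' with h0 | h0 <;> simp [h0]
      · have h'' : (c (E8 4)).val ≠ (c (E8 7)).val := fun hv => h' (Fin.ext hv)
        simp [h'']
    have f11 : ((c (E8 5)).val != (c (E8 6)).val || (c (E8 5)).val == 0 || (c (E8 5)).val == 1) = true := by
      rcases eq_or_ne (c (E8 5)) (c (E8 6)) with h' | h'
      · rcases colorFar hc (i := 5) (j := 6) (by decide) (by decide) h' with h0 | h0 <;> simp [h0]
      · have h'' : (c (E8 5)).val ≠ (c (E8 6)).val := fun hv => h' (Fin.ext hv)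
        simp [h'']
    have f12 : ((c (E8 5)).val != (c (E8 7)).val || (c (E8 5)).val == 0 || (c (E8 5)).val == 1) = true := by
      rcases eq_or_ne (c (E8 5)) (c (E8 7)) with h' | h'
      · rcases colorFar hc (i := 5) (j := 7) (by decide) (by decide) h' with h0 | h0 <;> simp [h0]
      · have h'' : (c (E8 5)).val ≠ (c (E8 7)).val := fun hv => h' (Fin.ext hv)
        simp [h'']
    have f13 : ((c (E8 6)).val != (c (E8 7)).val || (c (E8 6)).val == 0 || (c (E8 6)).val == 1) = true := by
      rcases eq_or_ne (c (E8 6)) (c (E8 7)) with h' | h'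
      · rcases colorFar hc (i := 6) (j := 7) (by decide) (by decide) h' with h0 | h0 <;> simp [h0]
      · have h'' : (c (E8 6)).val ≠ (c (E8 7)).val := fun hv => h' (Fin.ext hv)
        simp [h'']
    have hok : okN (c (E8 0)).val (c (E8 1)).val (c (E8 2)).val (c (E8 3)).val (c (E8 4)).val (c (E8 5)).val (c (E8 6)).val (c (E8 7)).val = true := by
      simp only [okN, Bool.and_eq_true]
      exact ⟨⟨⟨⟨⟨⟨⟨⟨⟨⟨⟨⟨⟨⟨⟨⟨⟨⟨⟨⟨⟨⟨⟨⟨⟨s1,s2⟩,s3⟩,s4⟩,s5⟩,s6⟩,s7⟩,s8⟩,s9⟩,s10⟩,s11⟩,s12⟩,s13⟩,f1⟩,f2⟩,f3⟩,f4⟩,f5⟩,f6⟩,f7⟩,f8⟩,f9⟩,f10⟩,f11⟩,f12⟩,f13⟩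
    have hq := key (c (E8 0)) (c (E8 1)) (c (E8 2)) (c (E8 3)) (c (E8 4)) (c (E8 5)) (c (E8 6)) (c (E8 7)) hok
    simp only [qN, Bool.or_eq_true, Bool.and_eq_true, beq_iff_eq] at hq
    rcases hq with ((((((((((((((⟨⟨⟨⟨⟨⟨⟨q1,q2⟩,q3⟩,q4⟩,q5⟩,q6⟩,q7⟩,q8⟩ | ⟨⟨⟨⟨⟨⟨⟨q1,q2⟩,q3⟩,q4⟩,q5⟩,q6⟩,q7⟩,q8⟩) | ⟨⟨⟨⟨⟨⟨⟨q1,q2⟩,q3⟩,q4⟩,q5⟩,q6⟩,q7⟩,q8⟩) | ⟨⟨⟨⟨⟨⟨⟨q1,q2⟩,q3⟩,q4⟩,q5⟩,q6⟩,q7⟩,q8⟩) | ⟨⟨⟨⟨⟨⟨⟨q1,q2⟩,q3⟩,q4⟩,q5⟩,q6⟩,q7⟩,q8⟩) | ⟨⟨⟨⟨⟨⟨⟨q1,q2⟩,q3⟩,q4⟩,q5⟩,q6⟩,q7⟩,q8⟩) | ⟨⟨⟨⟨⟨⟨⟨q1,q2⟩,q3⟩,q4⟩,q5⟩,q6⟩,q7⟩,q8⟩)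 | ⟨⟨⟨⟨⟨⟨⟨q1,q2⟩,q3⟩,q4⟩,q5⟩,q6⟩,q7⟩,q8⟩) | ⟨⟨⟨⟨⟨⟨⟨q1,q2⟩,q3⟩,q4⟩,q5⟩,q6⟩,q7⟩,q8⟩) | ⟨⟨⟨⟨⟨⟨⟨q1,q2⟩,q3⟩,q4⟩,q5⟩,q6⟩,q7⟩,q8⟩) | ⟨⟨⟨⟨⟨⟨⟨q1,q2⟩,q3⟩,q4⟩,q5⟩,q6⟩,q7⟩,q8⟩) | ⟨⟨⟨⟨⟨⟨⟨q1,q2⟩,q3⟩,q4⟩,q5⟩,q6⟩,q7⟩,q8⟩) | ⟨⟨⟨⟨⟨⟨⟨q1,q2⟩,q3⟩,q4⟩,q5⟩,q6⟩,q7⟩,q8⟩) | ⟨⟨⟨⟨⟨⟨⟨q1,q2⟩,q3⟩,q4⟩,q5⟩,q6⟩,q7⟩,q8⟩) | ⟨⟨⟨⟨⟨⟨⟨q1,q2⟩,q3⟩,q4⟩,q5⟩,q6⟩,q7⟩,q8⟩) | ⟨⟨⟨⟨⟨⟨⟨q1,q2⟩,q3⟩,q4⟩,q5⟩,q6⟩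,q7⟩,q8⟩
    · refine Or.inl (equivBuild c typeI (Equiv.refl (Fin 4)) (![3, 0, 1, 0, 2, 1, 2, 3] : Fin 8 → Fin 4) (by decide) (by decide) ?_ (by decide))
      intro i
      fin_cases i
      · exact Fin.ext q1
      · exact Fin.ext q2
      · exact Fin.ext q3
      · exact Fin.ext q4
      · exact Fin.ext q5
      · exact Fin.ext q6
      · exact Fin.ext q7
      · exact Fin.ext q8
    · refine Or.inl (equivBuildR c typeI (Equiv.refl (Fin 4)) (![3, 0, 1, 0, 2, 1, 2, 3] : Fin 8 → Fin 4) (by decide) (by decide) ?_ (by decide))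
      intro i
      fin_cases i
      · exact Fin.ext q1
      · exact Fin.ext q2
      · exact Fin.ext q3
      · exact Fin.ext q4
      · exact Fin.ext q5
      · exact Fin.ext q6
      · exact Fin.ext q7
      · exact Fin.ext q8
    · refine Or.inl (equivBuild c typeI (Equiv.swap 2 3) (![2, 0, 1, 0, 3, 1, 3, 2] : Fin 8 → Fin 4) (by decide) (by decide) ?_ (by decide))
      intro i
      fin_cases i
      · exact Fin.ext q1
      · exact Fin.ext q2
      · exact Fin.ext q3
      · exact Fin.ext q4
      · exact Fin.ext q5
      · exact Fin.ext q6
      · exact Fin.ext q7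
      · exact Fin.ext q8
    · refine Or.inl (equivBuildR c typeI (Equiv.swap 2 3) (![2, 0, 1, 0, 3, 1, 3, 2] : Fin 8 → Fin 4) (by decide) (by decide) ?_ (by decide))
      intro i
      fin_cases i
      · exact Fin.ext q1
      · exact Fin.ext q2
      · exact Fin.ext q3
      · exact Fin.ext q4
      · exact Fin.ext q5
      · exact Fin.ext q6
      · exact Fin.ext q7
      · exact Fin.ext q8
    · refine Or.inl (equivBuild c typeI (Equiv.swap 0 1) (![3, 1, 0, 1, 2, 0, 2, 3] : Fin 8 → Fin 4) (by decide) (by decide) ?_ (by decide))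
      intro i
      fin_cases i
      · exact Fin.ext q1
      · exact Fin.ext q2
      · exact Fin.ext q3
      · exact Fin.ext q4
      · exact Fin.ext q5
      · exact Fin.ext q6
      · exact Fin.ext q7
      · exact Fin.ext q8
    · refine Or.inl (equivBuildR c typeI (Equiv.swap 0 1) (![3, 1, 0, 1, 2, 0, 2, 3] : Fin 8 → Fin 4) (by decide) (by decide) ?_ (by decide))
      intro i
      fin_cases i
      · exact Fin.ext q1
      · exact Fin.ext q2
      · exact Fin.ext q3
      · exact Fin.ext q4
      · exact Fin.ext q5
      · exact Fin.ext q6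
      · exact Fin.ext q7
      · exact Fin.ext q8
    · refine Or.inl (equivBuild c typeI ((Equiv.swap 0 1).trans (Equiv.swap 2 3)) (![2, 1, 0, 1, 3, 0, 3, 2] : Fin 8 → Fin 4) (by decide) (by decide) ?_ (by decide))
      intro i
      fin_cases i
      · exact Fin.ext q1
      · exact Fin.ext q2
      · exact Fin.ext q3
      · exact Fin.ext q4
      · exact Fin.ext q5
      · exact Fin.ext q6
      · exact Fin.ext q7
      · exact Fin.ext q8
    · refine Or.inl (equivBuildR c typeI ((Equiv.swap 0 1).trans (Equiv.swap 2 3)) (![2, 1, 0, 1, 3, 0, 3, 2] : Fin 8 → Fin 4) (by decide) (by decide) ?_ (by decide))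
      intro i
      fin_cases i
      · exact Fin.ext q1
      · exact Fin.ext q2
      · exact Fin.ext q3
      · exact Fin.ext q4
      · exact Fin.ext q5
      · exact Fin.ext q6
      · exact Fin.ext q7
      · exact Fin.ext q8
    · refine Or.inr (equivBuild c typeII (Equiv.refl (Fin 4)) (![1, 0, 2, 1, 0, 3, 1, 0] : Fin 8 → Fin 4) (by decide) (by decide) ?_ (by decide))
      intro i
      fin_cases i
      · exact Fin.ext q1
      · exact Fin.ext q2
      · exact Fin.ext q3
      · exact Fin.ext q4
      · exact Fin.ext q5
      · exact Fin.ext q6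
      · exact Fin.ext q7
      · exact Fin.ext q8
    · refine Or.inr (equivBuildR c typeII (Equiv.refl (Fin 4)) (![1, 0, 2, 1, 0, 3, 1, 0] : Fin 8 → Fin 4) (by decide) (by decide) ?_ (by decide))
      intro i
      fin_cases i
      · exact Fin.ext q1
      · exact Fin.ext q2
      · exact Fin.ext q3
      · exact Fin.ext q4
      · exact Fin.ext q5
      · exact Fin.ext q6
      · exact Fin.ext q7
      · exact Fin.ext q8
    · refine Or.inr (equivBuild c typeII (Equiv.swap 2 3) (![1, 0, 3, 1, 0, 2, 1, 0] : Fin 8 → Fin 4) (by decide) (by decide) ?_ (by decide))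
      intro i
      fin_cases i
      · exact Fin.ext q1
      · exact Fin.ext q2
      · exact Fin.ext q3
      · exact Fin.ext q4
      · exact Fin.ext q5
      · exact Fin.ext q6
      · exact Fin.ext q7
      · exact Fin.ext q8
    · refine Or.inr (equivBuildR c typeII (Equiv.swap 2 3) (![1, 0, 3, 1, 0, 2, 1, 0] : Fin 8 → Fin 4) (by decide) (by decide) ?_ (by decide))
      intro i
      fin_cases i
      · exact Fin.ext q1
      · exact Fin.ext q2
      · exact Fin.ext q3
      · exact Fin.ext q4
      · exact Fin.ext q5
      · exact Fin.ext q6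
      · exact Fin.ext q7
      · exact Fin.ext q8
    · refine Or.inr (equivBuild c typeII (Equiv.swap 0 1) (![0, 1, 2, 0, 1, 3, 0, 1] : Fin 8 → Fin 4) (by decide) (by decide) ?_ (by decide))
      intro i
      fin_cases i
      · exact Fin.ext q1
      · exact Fin.ext q2
      · exact Fin.ext q3
      · exact Fin.ext q4
      · exact Fin.ext q5
      · exact Fin.ext q6
      · exact Fin.ext q7
      · exact Fin.ext q8
    · refine Or.inr (equivBuildR c typeII (Equiv.swap 0 1) (![0, 1, 2, 0, 1, 3, 0, 1] : Fin 8 → Fin 4) (by decide) (by decide) ?_ (by decide))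
      intro i
      fin_cases i
      · exact Fin.ext q1
      · exact Fin.ext q2
      · exact Fin.ext q3
      · exact Fin.ext q4
      · exact Fin.ext q5
      · exact Fin.ext q6
      · exact Fin.ext q7
      · exact Fin.ext q8
    · refine Or.inr (equivBuild c typeII ((Equiv.swap 0 1).trans (Equiv.swap 2 3)) (![0, 1, 3, 0, 1, 2, 0, 1] : Fin 8 → Fin 4) (by decide) (by decide) ?_ (by decide))
      intro i
      fin_cases i
      · exact Fin.ext q1
      · exact Fin.ext q2
      · exact Fin.ext q3
      · exact Fin.ext q4
      · exact Fin.ext q5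
      · exact Fin.ext q6
      · exact Fin.ext q7
      · exact Fin.ext q8
    · refine Or.inr (equivBuildR c typeII ((Equiv.swap 0 1).trans (Equiv.swap 2 3)) (![0, 1, 3, 0, 1, 2, 0, 1] : Fin 8 → Fin 4) (by decide) (by decide) ?_ (by decide))
      intro i
      fin_cases i
      · exact Fin.ext q1
      · exact Fin.ext q2
      · exact Fin.ext q3
      · exact Fin.ext q4
      · exact Fin.ext q5
      · exact Fin.ext q6
      · exact Fin.ext q7
      · exact Fin.ext q8
  · rintro ⟨σ, hσ1, hσ2, hm | hm⟩
    · have hx := hm (E8 0) (hmemE 0)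
      have hI : typeI (E8 0) = 3 := by decide
      rw [hI] at hx
      rcases hσ2 with ⟨_, h3⟩ | ⟨_, h3⟩ <;> rw [h3] at hx <;> exact absurd hx (by decide)
    · have hx := hm (E8 0) (hmemE 0)
      have hI : typeI ((E8 0).map houseRefl) = 2 := by decide
      rw [hI] at hx
      rcases hσ2 with ⟨h2, _⟩ | ⟨h2, _⟩ <;> rw [h2] at hx <;> exact absurd hx (by decide)
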